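/- arXiv:1802.08416 — 7 statements merged into one kernel-verified Lean document; each statement's English description precedes it below -/
import Mathlib

section
/- For a Blaschke product B(z) = e^{iθ} ∏_{k=1}^d (z - a_k)/(1 - conj(a_k) z) with all a_k in the open unit disk, and any λ on the unit circle, the equation B(z) = λ has exactly d distinct solutions, all lying on the unit circle. -/
/-!
Clearing denominators, `B z = λ` becomes `P z = 0` for
`P = e^{iθ} ∏ (X - a_k) - λ ∏ (1 - conj a_k X)`, whose `X^d`-coefficient
`e^{iθ} - λ ∏ (-conj a_k)` is nonzero because `|∏ a_k| < 1`; so `P` has `d` roots with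
multiplicity. The identity `|z - a|² - |1 - conj a z|² = (|z|² - 1)(1 - |a|²)` makes every factor
ratio `|z - a_k| / |1 - conj a_k z|` lie on the same side of `1` as `|z|`, so roots of `P` lie on
the unit circle. There `z B'(z) / B(z) = ∑ (1 - |a_k|²) / |z - a_k|² > 0`, so the roots are simple.
-/

open Complex ComplexConjugate Finset Polynomial

theorem Finset.prod_lt_prod_of_nonempty_of_nonneg {ι R : Type*} [CommMonoidWithZero R]
    [PartialOrder R] [ZeroLEOneClass R] [PosMulStrictMono R] [Nontrivial R]
    {s : Finset ι} {f g : ι → R} (hf : ∀ i ∈ s, 0 ≤ f i) (hfg : ∀ i ∈ s, f i < g i)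
    (hs : s.Nonempty) : ∏ i ∈ s, f i < ∏ i ∈ s, g i := by
  by_cases hpos : ∀ i ∈ s, 0 < f i
  · exact prod_lt_prod_of_nonempty hpos hfg hs
  · obtain ⟨i, hi, hfi⟩ := not_forall₂.mp hpos
    rw [prod_eq_zero hi ((hf i hi).eq_of_not_lt hfi).symm]
    exact prod_pos fun j hj => (hf j hj).trans_lt (hfg j hj)

theorem Polynomial.nodup_roots_of_eval_derivative_ne_zero {K : Type*} [Field K] {p : K[X]}
    (h : ∀ x, p.IsRoot x → p.derivative.eval x ≠ 0) : p.roots.Nodup := by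
  classical
  rcases eq_or_ne p 0 with rfl | hp
  · simp
  rw [Multiset.nodup_iff_count_le_one]
  intro x
  rw [count_roots]
  by_contra! hx
  obtain ⟨hroot, hderiv⟩ := (one_lt_rootMultiplicity_iff_isRoot hp).1 hx
  exact h x hroot hderiv

theorem Polynomial.eval_derivative_prod {ι K : Type*} [Field K] [DecidableEq ι] (s : Finset ι)
    (f : ι → K[X]) {x : K} (hf : ∀ i ∈ s, (f i).eval x ≠ 0) :
    (∏ i ∈ s, f i).derivative.eval x
      = (∏ i ∈ s, f i).eval x * ∑ i ∈ s, (f i).derivative.eval x / (f i).eval x := by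
  rw [derivative_prod_finset, eval_finsetSum, mul_sum]
  refine sum_congr rfl fun i hi => ?_
  rw [eval_mul, eval_prod, eval_prod, ← mul_prod_erase s _ hi]
  field_simp [hf i hi]

theorem norm_sub_sq_sub_norm_one_sub_conj_mul_sq (z w : ℂ) :
    ‖z - w‖ ^ 2 - ‖1 - conj w * z‖ ^ 2 = (‖z‖ ^ 2 - 1) * (1 - ‖w‖ ^ 2) := by
  simp only [Complex.sq_norm, normSq_apply, sub_re, sub_im, mul_re, mul_im, one_re, one_im, conj_re,
    conj_im]
  ring

theorem norm_sub_lt_norm_one_sub_conj_mul {z w : ℂ} (hw : ‖w‖ < 1) (hz : ‖z‖ < 1) :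
    ‖z - w‖ < ‖1 - conj w * z‖ := by
  have := norm_sub_sq_sub_norm_one_sub_conj_mul_sq z w
  have : (‖z‖ ^ 2 - 1) * (1 - ‖w‖ ^ 2) < 0 :=
    mul_neg_of_neg_of_pos (by nlinarith [norm_nonneg z]) (by nlinarith [norm_nonneg w])
  exact lt_of_pow_lt_pow_left₀ 2 (norm_nonneg _) (by linarith)

theorem norm_one_sub_conj_mul_lt_norm_sub {z w : ℂ} (hw : ‖w‖ < 1) (hz : 1 < ‖z‖) :
    ‖1 - conj w * z‖ < ‖z - w‖ := by
  have := norm_sub_sq_sub_norm_one_sub_conj_mul_sq z w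
  have : 0 < (‖z‖ ^ 2 - 1) * (1 - ‖w‖ ^ 2) :=
    mul_pos (by nlinarith) (by nlinarith [norm_nonneg w])
  exact lt_of_pow_lt_pow_left₀ 2 (norm_nonneg _) (by linarith)

theorem one_sub_conj_mul_ne_zero {z w : ℂ} (hw : ‖w‖ < 1) (hz : ‖z‖ ≤ 1) :
    1 - conj w * z ≠ 0 := by
  rw [sub_ne_zero]
  intro h
  have : ‖conj w * z‖ < 1 := by
    rw [norm_mul, norm_conj]
    exact mul_lt_one_of_nonneg_of_lt_one_left (norm_nonneg w) hw hz
  rw [← h, norm_one] at this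
  exact lt_irrefl 1 this

theorem re_mul_inv_sub_add_conj_div_pos {z w : ℂ} (hw : ‖w‖ < 1) (hz : ‖z‖ = 1) (hzw : z ≠ w) :
    0 < (z * ((z - w)⁻¹ + conj w / (1 - conj w * z))).re := by
  have hzz : z * conj z = 1 := by
    rw [mul_conj, normSq_eq_norm_sq, hz]; norm_num
  have hz0 : z ≠ 0 := left_ne_zero_of_mul_eq_one hzz
  have hzw' : z - w ≠ 0 := sub_ne_zero.mpr hzw
  have hzw'' : conj (z - w) ≠ 0 := (_root_.map_ne_zero _).mpr hzw'
  have hfac : 1 - conj w * z = z * conj (z - w) := by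
    rw [map_sub]; linear_combination -hzz
  have key : z * ((z - w)⁻¹ + conj w / (1 - conj w * z))
      = ((1 - normSq w) / normSq (z - w) : ℝ) := by
    rw [hfac, ofReal_div, ofReal_sub, ofReal_one, ← mul_conj, ← mul_conj]
    field_simp
    rw [map_sub]
    linear_combination hzz
  rw [key, ofReal_re]
  have : normSq w < 1 := by rw [normSq_eq_norm_sq]; nlinarith [norm_nonneg w]
  exact div_pos (by linarith) (normSq_pos.mpr hzw')

theorem sum_inv_sub_add_conj_div_ne_zero {ι : Type*} [Fintype ι] [Nonempty ι] {a : ι → ℂ}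
    (ha : ∀ k, ‖a k‖ < 1) {z : ℂ} (hz : ‖z‖ = 1) (hza : ∀ k, z ≠ a k) :
    ∑ k, ((z - a k)⁻¹ + conj (a k) / (1 - conj (a k) * z)) ≠ 0 := by
  intro h
  have hpos : 0 < (z * ∑ k, ((z - a k)⁻¹ + conj (a k) / (1 - conj (a k) * z))).re := by
    rw [mul_sum, re_sum]
    exact sum_pos (fun k _ => re_mul_inv_sub_add_conj_div_pos (ha k) hz (hza k)) univ_nonempty
  rw [h, mul_zero, zero_re] at hpos
  exact lt_irrefl 0 hpos

theorem Polynomial.natDegree_prod_le_card_mul {ι R : Type*} [CommSemiring R] (s : Finset ι)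
    (f : ι → R[X]) {n : ℕ} (h : ∀ i ∈ s, (f i).natDegree ≤ n) :
    (∏ i ∈ s, f i).natDegree ≤ #s * n :=
  (natDegree_prod_le s f).trans (by simpa using sum_le_card_nsmul s _ n h)

theorem Polynomial.natDegree_one_sub_C_mul_X_le {R : Type*} [Ring R] (c : R) :
    (1 - C c * X).natDegree ≤ 1 := by
  compute_degree

section BlaschkeLevel

variable {ι : Type*} [Fintype ι]

/-- The numerator of `c * ∏ k, (z - a k) / (1 - conj (a k) * z) - lam`. -/
noncomputable def blaschkeLevelPoly (c lam : ℂ) (a : ι → ℂ) : ℂ[X] :=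
  C c * ∏ k, (X - C (a k)) - C lam * ∏ k, (1 - C (conj (a k)) * X)

theorem eval_blaschkeLevelPoly (c lam : ℂ) (a : ι → ℂ) (z : ℂ) :
    (blaschkeLevelPoly c lam a).eval z
      = c * ∏ k, (z - a k) - lam * ∏ k, (1 - conj (a k) * z) := by
  simp [blaschkeLevelPoly, eval_prod]

theorem natDegree_blaschkeLevelPoly_le (c lam : ℂ) (a : ι → ℂ) :
    (blaschkeLevelPoly c lam a).natDegree ≤ Fintype.card ι := by
  have hN := natDegree_prod_le_card_mul univ (fun k => X - C (a k)) fun k _ =>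
    natDegree_X_sub_C_le (a k)
  have hD := natDegree_prod_le_card_mul univ (fun k => 1 - C (conj (a k)) * X) fun k _ =>
    natDegree_one_sub_C_mul_X_le (conj (a k))
  rw [card_univ, mul_one] at hN hD
  exact (natDegree_sub_le _ _).trans <|
    max_le ((natDegree_C_mul_le _ _).trans hN) ((natDegree_C_mul_le _ _).trans hD)

theorem coeff_blaschkeLevelPoly_card (c lam : ℂ) (a : ι → ℂ) :
    (blaschkeLevelPoly c lam a).coeff (Fintype.card ι) = c - lam * ∏ k, -conj (a k) := by
  have hN := coeff_prod_of_natDegree_le univ (fun k => X - C (a k)) 1 fun k _ =>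
    natDegree_X_sub_C_le (a k)
  have hD := coeff_prod_of_natDegree_le univ (fun k => 1 - C (conj (a k)) * X) 1 fun k _ =>
    natDegree_one_sub_C_mul_X_le (conj (a k))
  rw [card_univ, mul_one] at hN hD
  simp [blaschkeLevelPoly, coeff_C_mul, coeff_one, hN, hD]

variable [Nonempty ι] {c lam : ℂ} {a : ι → ℂ}

theorem natDegree_blaschkeLevelPoly (ha : ∀ k, ‖a k‖ < 1) (hlam : lam ≠ 0) (hc : ‖c‖ = ‖lam‖) :
    (blaschkeLevelPoly c lam a).natDegree = Fintype.card ι := by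
  refine (natDegree_blaschkeLevelPoly_le c lam a).antisymm (le_natDegree_of_ne_zero ?_)
  have hprod : ∏ k, ‖a k‖ < 1 := by
    simpa using prod_lt_prod_of_nonempty_of_nonneg (g := fun _ => 1)
      (fun k _ => norm_nonneg (a k)) (fun k _ => ha k) univ_nonempty
  rw [coeff_blaschkeLevelPoly_card, sub_ne_zero]
  intro h
  have : ‖c‖ < ‖lam‖ := by
    rw [h, norm_mul, norm_prod]
    simpa using mul_lt_of_lt_one_right (norm_pos_iff.mpr hlam) hprod
  exact this.ne hc

theorem norm_eq_one_of_isRoot_blaschkeLevelPoly (ha : ∀ k, ‖a k‖ < 1) (hlam : lam ≠ 0)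
    (hc : ‖c‖ = ‖lam‖) {z : ℂ} (hz : (blaschkeLevelPoly c lam a).IsRoot z) : ‖z‖ = 1 := by
  have hprod : ∏ k, ‖z - a k‖ = ∏ k, ‖1 - conj (a k) * z‖ := by
    have := congrArg norm (sub_eq_zero.mp ((eval_blaschkeLevelPoly c lam a z).symm.trans hz))
    rw [norm_mul, norm_mul, norm_prod, norm_prod, hc] at this
    exact mul_left_cancel₀ (norm_ne_zero_iff.mpr hlam) this
  rcases lt_trichotomy ‖z‖ 1 with h | h | h
  · exact absurd hprod (prod_lt_prod_of_nonempty_of_nonneg (fun _ _ => norm_nonneg _)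
      (fun k _ => norm_sub_lt_norm_one_sub_conj_mul (ha k) h) univ_nonempty).ne
  · exact h
  · exact absurd hprod (prod_lt_prod_of_nonempty_of_nonneg (fun _ _ => norm_nonneg _)
      (fun k _ => norm_one_sub_conj_mul_lt_norm_sub (ha k) h) univ_nonempty).ne'

theorem eval_derivative_blaschkeLevelPoly_ne_zero (ha : ∀ k, ‖a k‖ < 1) (hlam : lam ≠ 0)
    (hc : ‖c‖ = ‖lam‖) {z : ℂ} (hz : (blaschkeLevelPoly c lam a).IsRoot z) :
    (blaschkeLevelPoly c lam a).derivative.eval z ≠ 0 := by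
  classical
  have hz1 := norm_eq_one_of_isRoot_blaschkeLevelPoly ha hlam hc hz
  have hroot : c * ∏ k, (z - a k) = lam * ∏ k, (1 - conj (a k) * z) :=
    sub_eq_zero.mp ((eval_blaschkeLevelPoly c lam a z).symm.trans hz)
  have hden : ∀ k, 1 - conj (a k) * z ≠ 0 := fun k => one_sub_conj_mul_ne_zero (ha k) hz1.le
  have hnum : c * ∏ k, (z - a k) ≠ 0 := by
    rw [hroot]
    exact mul_ne_zero hlam (prod_ne_zero_iff.mpr fun k _ => hden k)
  have hza : ∀ k, z - a k ≠ 0 := fun k h =>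
    hnum (mul_eq_zero_of_right c (prod_eq_zero (mem_univ k) h))
  have hderiv : (blaschkeLevelPoly c lam a).derivative.eval z
      = (c * ∏ k, (z - a k)) * ∑ k, ((z - a k)⁻¹ + conj (a k) / (1 - conj (a k) * z)) := by
    simp only [blaschkeLevelPoly, derivative_sub, derivative_C_mul, eval_sub, eval_mul, eval_C]
    rw [eval_derivative_prod _ _ (by simpa using fun k => hza k),
      eval_derivative_prod _ _ (by simpa using fun k => hden k)]
    simp only [eval_prod, eval_sub, eval_X, eval_C, eval_one, eval_mul, eval_neg, derivative_sub,
      derivative_X, derivative_C, derivative_one, derivative_mul, zero_mul, zero_add, mul_one,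
      sub_zero, zero_sub, one_div, neg_div, sum_add_distrib, sum_neg_distrib]
    rw [← mul_assoc, ← mul_assoc, hroot]
    ring
  rw [hderiv]
  exact mul_ne_zero hnum (sum_inv_sub_add_conj_div_ne_zero ha hz1 fun k => sub_ne_zero.mp (hza k))

theorem mul_prod_div_eq_iff_isRoot_blaschkeLevelPoly (ha : ∀ k, ‖a k‖ < 1) (hlam : lam ≠ 0)
    (hc : ‖c‖ = ‖lam‖) (z : ℂ) :
    c * ∏ k, (z - a k) / (1 - conj (a k) * z) = lam ↔ (blaschkeLevelPoly c lam a).IsRoot z := by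
  by_cases hden : ∀ k, 1 - conj (a k) * z ≠ 0
  · rw [IsRoot, eval_blaschkeLevelPoly, sub_eq_zero, prod_div_distrib, ← mul_div_assoc,
      div_eq_iff (prod_ne_zero_iff.mpr fun k _ => hden k)]
  · obtain ⟨k, hk⟩ := not_forall_not.mp hden
    rw [prod_eq_zero (mem_univ k) (by rw [hk, div_zero]), mul_zero]
    refine ⟨fun h => absurd h.symm hlam, fun hz => absurd hk ?_⟩
    exact one_sub_conj_mul_ne_zero (ha k) (norm_eq_one_of_isRoot_blaschkeLevelPoly ha hlam hc hz).le

end BlaschkeLevel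

theorem blaschke_preimage_card (d : ℕ) (hd : 1 ≤ d) (θ : ℝ) (a : Fin d → ℂ)
    (ha : ∀ k, ‖a k‖ < 1)
    (B : ℂ → ℂ)
    (hB : ∀ z, B z = Complex.exp (θ * Complex.I) *
      ∏ k, (z - a k) / (1 - (starRingEnd ℂ) (a k) * z))
    (lam : ℂ) (hlam : ‖lam‖ = 1) :
    ∃ s : Finset ℂ, s.card = d ∧ (∀ z, B z = lam ↔ z ∈ s) ∧
      ∀ z ∈ s, ‖z‖ = 1 := by
  have : Nonempty (Fin d) := ⟨⟨0, hd⟩⟩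
  have hlam0 : lam ≠ 0 := norm_ne_zero_iff.mp (by rw [hlam]; exact one_ne_zero)
  have hc : ‖exp (θ * I)‖ = ‖lam‖ := by rw [hlam, norm_exp_ofReal_mul_I]
  set P := blaschkeLevelPoly (exp (θ * I)) lam a
  have hdeg : P.natDegree = d := by
    rw [natDegree_blaschkeLevelPoly ha hlam0 hc, Fintype.card_fin]
  have hmem : ∀ z, z ∈ P.roots.toFinset ↔ P.IsRoot z := fun z => by
    rw [Multiset.mem_toFinset, mem_roots (ne_zero_of_natDegree_gt (hdeg ▸ hd))]
  refine ⟨P.roots.toFinset, ?_, fun z => ?_, fun z hz => ?_⟩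
  · rw [Multiset.toFinset_card_of_nodup (nodup_roots_of_eval_derivative_ne_zero fun z hz =>
      eval_derivative_blaschkeLevelPoly_ne_zero ha hlam0 hc hz),
      IsAlgClosed.card_roots_eq_natDegree, hdeg]
  · rw [hB, hmem]
    exact mul_prod_div_eq_iff_isRoot_blaschkeLevelPoly ha hlam0 hc z
  · exact norm_eq_one_of_isRoot_blaschkeLevelPoly ha hlam0 hc ((hmem z).mp hz)
end

section
/- The derivative of a Blaschke product of degree d has no zeros on the unit circle. -/
/-! On the unit circle `1 - conj a * z = z * conj (z - a)`, so each Blaschke factor `b_a`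
satisfies `z * b_a'(z) / b_a(z) = (1 - ‖a‖²) / ‖z - a‖²`, a positive real number. The
logarithmic derivative of a product is the sum of those of its factors, hence
`z * B'(z) / B(z)` has positive real part. -/

open Complex Finset ComplexConjugate

noncomputable def blaschkeFactor (a z : ℂ) : ℂ := (z - a) / (1 - conj a * z)

theorem one_sub_conj_mul_eq_mul_conj_sub {a z : ℂ} (hz : ‖z‖ = 1) :
    1 - conj a * z = z * conj (z - a) := by
  have hzz : z * conj z = 1 := by
    rw [mul_conj, normSq_eq_norm_sq, hz]; norm_num
  rw [map_sub, mul_sub, hzz, mul_comm]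

theorem one_sub_conj_mul_ne_zero_of_norm_eq_one {a z : ℂ} (hz : ‖z‖ = 1) (hza : z ≠ a) :
    1 - conj a * z ≠ 0 := by
  rw [one_sub_conj_mul_eq_mul_conj_sub hz]
  exact mul_ne_zero (norm_ne_zero_iff.mp (by simp [hz]))
    ((map_ne_zero _).mpr (sub_ne_zero.mpr hza))

theorem differentiableAt_blaschkeFactor {a z : ℂ} (hden : 1 - conj a * z ≠ 0) :
    DifferentiableAt ℂ (blaschkeFactor a) z := by
  unfold blaschkeFactor
  fun_prop (disch := exact hden)

theorem logDeriv_blaschkeFactor {a z : ℂ} (hza : z ≠ a) (hden : 1 - conj a * z ≠ 0) :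
    logDeriv (blaschkeFactor a) z = (1 - conj a * a) / ((z - a) * (1 - conj a * z)) := by
  have hnum : z - a ≠ 0 := sub_ne_zero.mpr hza
  unfold blaschkeFactor
  rw [logDeriv_div z hnum hden (by fun_prop) (by fun_prop)]
  have hden' : HasDerivAt (fun w => 1 - conj a * w) (-conj a) z := by
    simpa using ((hasDerivAt_id z).const_mul (conj a)).const_sub 1
  simp only [logDeriv_apply, deriv_sub_const, deriv_id'', hden'.deriv]
  rw [div_sub_div _ _ hnum hden]
  ring

theorem mul_logDeriv_blaschkeFactor_of_norm_eq_one {a z : ℂ} (hz : ‖z‖ = 1) (hza : z ≠ a) :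
    z * logDeriv (blaschkeFactor a) z = ((1 - ‖a‖ ^ 2) / ‖z - a‖ ^ 2 : ℝ) := by
  rw [logDeriv_blaschkeFactor hza (one_sub_conj_mul_ne_zero_of_norm_eq_one hz hza),
    one_sub_conj_mul_eq_mul_conj_sub hz]
  have hz0 : z ≠ 0 := norm_ne_zero_iff.mp (by simp [hz])
  have hnum : z - a ≠ 0 := sub_ne_zero.mpr hza
  push_cast
  rw [← mul_conj', ← mul_conj' (z - a)]
  field_simp

theorem re_mul_logDeriv_blaschkeFactor_pos {a z : ℂ} (ha : ‖a‖ < 1) (hz : ‖z‖ = 1) :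
    0 < (z * logDeriv (blaschkeFactor a) z).re := by
  have hza : z ≠ a := by rintro rfl; linarith
  rw [mul_logDeriv_blaschkeFactor_of_norm_eq_one hz hza, ofReal_re]
  have : ‖a‖ ^ 2 < 1 := by nlinarith [norm_nonneg a]
  have : 0 < ‖z - a‖ := norm_pos_iff.mpr (sub_ne_zero.mpr hza)
  positivity

theorem blaschke_deriv_ne_zero_on_circle (d : ℕ) (hd : 1 ≤ d) (θ : ℝ) (a : Fin d → ℂ)
    (ha : ∀ k, ‖a k‖ < 1)
    (B : ℂ → ℂ)
    (hB : ∀ z, B z = Complex.exp (θ * Complex.I) *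
      ∏ k, (z - a k) / (1 - (starRingEnd ℂ) (a k) * z))
    (z : ℂ) (hz : ‖z‖ = 1) :
    deriv B z ≠ 0 := by
  have hB' : B = fun w => exp (θ * I) * ∏ k, blaschkeFactor (a k) w := funext hB
  have hza : ∀ k, z ≠ a k := fun k h => (ha k).ne (h ▸ hz)
  have hden : ∀ k, 1 - conj (a k) * z ≠ 0 :=
    fun k => one_sub_conj_mul_ne_zero_of_norm_eq_one hz (hza k)
  have hlog : z * logDeriv B z = ∑ k, z * logDeriv (blaschkeFactor (a k)) z := by
    rw [hB', logDeriv_const_mul _ _ (exp_ne_zero _), logDeriv_prod, mul_sum]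
    · exact fun k _ => div_ne_zero (sub_ne_zero.mpr (hza k)) (hden k)
    · exact fun k _ => differentiableAt_blaschkeFactor (hden k)
  have hpos : 0 < (z * logDeriv B z).re := by
    have : Nonempty (Fin d) := Fin.pos_iff_nonempty.mp hd
    rw [hlog, re_sum]
    exact sum_pos (fun k _ => re_mul_logDeriv_blaschkeFactor_pos (ha k) hz) univ_nonempty
  intro hB0
  simp [logDeriv_apply, hB0] at hpos
end

section
/- Let B be a canonical Blaschke product of degree 3 with zeros 0, a_1, a_2. For λ on the unit circle with preimages z_1, z_2, z_3 of λ under B, write B(z)/(z(B(z) - λ)) = m_1/(z - z_1) + m_2/(z - z_2) + m_3/(z - z_3) as a partial fraction decomposition. Then m_1 + m_2 + m_3 = 1 and 0 < m_j < 1 for j = 1, 2, 3. -/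
/-!
Clearing denominators, `B z - λ = P(z) / ((1 - ā₁ z)(1 - ā₂ z))` for the monic cubic
`P(z) = z (z - a₁)(z - a₂) - λ (1 - ā₁ z)(1 - ā₂ z)`, whose roots are `z₁, z₂, z₃`. Hence
`B(z) / (z (B(z) - λ)) = (z - a₁)(z - a₂) / P(z)`, so `(z - a₁)(z - a₂) = ∑ mⱼ ∏_{k ≠ j} (z - z_k)`
as polynomials: comparing leading coefficients gives `∑ mⱼ = 1`, and evaluating at `zⱼ` gives
`mⱼ P'(zⱼ) = (zⱼ - a₁)(zⱼ - a₂)`.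

Since `|z - a|² - |1 - ā z|² = (|z|² - 1)(1 - |a|²)`, a root of `P` lies on the unit circle, where
`(z - a)(1 - ā z) = z |z - a|²`. There the logarithmic derivative gives
`P'(z) = (1 + ∑ᵢ (1 - |aᵢ|²) / |z - aᵢ|²) (z - a₁)(z - a₂)`, with a real factor `> 1`,
so `0 < mⱼ < 1`.
-/

open Complex ComplexConjugate

section CommRing

variable {R : Type*} [CommRing R] [NoZeroDivisors R] {α β γ x y z : R}

theorem quadratic_coeffs_eq_zero (hxy : x ≠ y) (hxz : x ≠ z) (hyz : y ≠ z)
    (hx : α * x ^ 2 + β * x + γ = 0) (hy : α * y ^ 2 + β * y + γ = 0)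
    (hz : α * z ^ 2 + β * z + γ = 0) : α = 0 ∧ β = 0 ∧ γ = 0 := by
  have hxy' : α * (x + y) + β = 0 := by
    refine (mul_eq_zero.mp ?_).resolve_right (sub_ne_zero.mpr hxy)
    linear_combination hx - hy
  have hxz' : α * (x + z) + β = 0 := by
    refine (mul_eq_zero.mp ?_).resolve_right (sub_ne_zero.mpr hxz)
    linear_combination hx - hz
  have hα : α = 0 := by
    refine (mul_eq_zero.mp ?_).resolve_right (sub_ne_zero.mpr hyz)
    linear_combination hxy' - hxz'
  have hβ : β = 0 := by linear_combination hxy' - (x + y) * hα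
  exact ⟨hα, hβ, by linear_combination hx - x ^ 2 * hα - x * hβ⟩

theorem quadratic_coeffs_eq_zero_of_finite [Infinite R] {s : Set R} (hs : s.Finite)
    (h : ∀ x ∉ s, α * x ^ 2 + β * x + γ = 0) : α = 0 ∧ β = 0 ∧ γ = 0 := by
  classical
  obtain ⟨t, hts, ht⟩ := hs.infinite_compl.exists_subset_card_eq 3
  obtain ⟨x, y, z, hxy, hxz, hyz, rfl⟩ := Finset.card_eq_three.mp ht
  simp only [Finset.coe_insert, Finset.coe_singleton, Set.insert_subset_iff,
    Set.singleton_subset_iff, Set.mem_compl_iff] at hts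
  exact quadratic_coeffs_eq_zero hxy hxz hyz (h x hts.1) (h y hts.2.1) (h z hts.2.2)

theorem vieta_of_three_roots {s p q : R} (hxy : x ≠ y) (hxz : x ≠ z) (hyz : y ≠ z)
    (hx : x ^ 3 - s * x ^ 2 + p * x - q = 0) (hy : y ^ 3 - s * y ^ 2 + p * y - q = 0)
    (hz : z ^ 3 - s * z ^ 2 + p * z - q = 0) :
    x + y + z = s ∧ x * y + x * z + y * z = p ∧ x * y * z = q := by
  obtain ⟨h₂, h₁, h₀⟩ := quadratic_coeffs_eq_zero (α := x + y + z - s)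
    (β := p - (x * y + x * z + y * z)) (γ := x * y * z - q) hxy hxz hyz
    (by linear_combination hx) (by linear_combination hy) (by linear_combination hz)
  exact ⟨by linear_combination h₂, by linear_combination -h₁, by linear_combination h₀⟩

end CommRing

theorem one_sub_mul_ne_zero_of_ne_inv {K : Type*} [DivisionRing K] {c w : K} (h : w ≠ c⁻¹) :
    1 - c * w ≠ 0 :=
  fun h₀ ↦ h (eq_inv_of_mul_eq_one_right (sub_eq_zero.mp h₀).symm)

theorem numerator_eq_of_eq_partial_fractions {K : Type*} [Field K] {N w z₁ z₂ z₃ m₁ m₂ m₃ : K}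
    (hw₁ : w ≠ z₁) (hw₂ : w ≠ z₂) (hw₃ : w ≠ z₃)
    (h : N / ((w - z₁) * (w - z₂) * (w - z₃)) = m₁ / (w - z₁) + m₂ / (w - z₂) + m₃ / (w - z₃)) :
    N = m₁ * ((w - z₂) * (w - z₃)) + m₂ * ((w - z₁) * (w - z₃)) + m₃ * ((w - z₁) * (w - z₂)) := by
  have := sub_ne_zero.mpr hw₁
  have := sub_ne_zero.mpr hw₂
  have := sub_ne_zero.mpr hw₃
  field_simp at h
  linear_combination h

theorem normSq_sub_sub_normSq_one_sub_conj_mul (a z : ℂ) :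
    normSq (z - a) - normSq (1 - conj a * z) = (normSq z - 1) * (1 - normSq a) := by
  simp only [normSq_apply, sub_re, sub_im, mul_re, mul_im, conj_re, conj_im, one_re, one_im]
  ring

theorem normSq_eq_one_of_mul_eq {a₁ a₂ lam z : ℂ} (ha₁ : normSq a₁ < 1)
    (ha₂ : normSq a₂ < 1) (hlam : normSq lam = 1)
    (h : z * (z - a₁) * (z - a₂) = lam * ((1 - conj a₁ * z) * (1 - conj a₂ * z))) :
    normSq z = 1 := by
  have key := congrArg normSq h
  simp only [map_mul, hlam, one_mul] at key
  have e₁ := normSq_sub_sub_normSq_one_sub_conj_mul a₁ z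
  have e₂ := normSq_sub_sub_normSq_one_sub_conj_mul a₂ z
  rcases lt_trichotomy (normSq z) 1 with hz | hz | hz
  · have l₁ : normSq (z - a₁) < normSq (1 - conj a₁ * z) := by nlinarith
    have l₂ : normSq (z - a₂) < normSq (1 - conj a₂ * z) := by nlinarith
    have hprod := mul_lt_mul'' l₁ l₂ (normSq_nonneg _) (normSq_nonneg _)
    have hle := mul_le_of_le_one_left
      (mul_nonneg (normSq_nonneg (z - a₁)) (normSq_nonneg (z - a₂))) hz.le
    linarith
  · exact hz
  · have l₁ : normSq (1 - conj a₁ * z) < normSq (z - a₁) := by nlinarith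
    have l₂ : normSq (1 - conj a₂ * z) < normSq (z - a₂) := by nlinarith
    have hprod := mul_lt_mul'' l₁ l₂ (normSq_nonneg _) (normSq_nonneg _)
    have hlt := lt_mul_left
      (hprod.trans_le' (mul_nonneg (normSq_nonneg _) (normSq_nonneg _))) hz
    linarith

-- On the unit circle `conj (z - a) = (1 - conj a * z) / z`, so `normSq (z - a) = (z - a)(1 - ā z) / z`.
theorem one_sub_normSq_div_normSq_sub_mul {a b lam z : ℂ} (hz : z * conj z = 1) (ha : z ≠ a)
    (h : z * (z - a) * (z - b) = lam * ((1 - conj a * z) * (1 - conj b * z))) :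
    ((1 - normSq a) / normSq (z - a) : ℂ) * ((z - a) * (z - b)) =
      z * (z - b) + lam * conj a * (1 - conj b * z) := by
  have hr : (normSq (z - a) : ℂ) ≠ 0 := by
    exact_mod_cast (normSq_pos.mpr (sub_ne_zero.mpr ha)).ne'
  rw [div_mul_eq_mul_div, div_eq_iff hr, ← mul_conj, ← mul_conj, map_sub]
  linear_combination -((z - a) * (z - b) + lam * conj a ^ 2 * (1 - conj b * z) * (z - a)
    + conj a * (z - a) ^ 2 * (z - b)) * hz + conj a * (z - a) * conj z * h

noncomputable def blaschke (a₁ a₂ z : ℂ) : ℂ :=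
  z * ((z - a₁) / (1 - conj a₁ * z)) * ((z - a₂) / (1 - conj a₂ * z))

def blaschkeCubic (a₁ a₂ lam z : ℂ) : ℂ :=
  z * (z - a₁) * (z - a₂) - lam * ((1 - conj a₁ * z) * (1 - conj a₂ * z))

def blaschkeCubicDeriv (a₁ a₂ lam z : ℂ) : ℂ :=
  (z - a₁) * (z - a₂) + z * (z - a₂) + z * (z - a₁)
    + lam * (conj a₁ * (1 - conj a₂ * z) + conj a₂ * (1 - conj a₁ * z))

section Blaschke

variable {a₁ a₂ lam z : ℂ}

theorem blaschke_eq_div :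
    blaschke a₁ a₂ z = z * (z - a₁) * (z - a₂) / ((1 - conj a₁ * z) * (1 - conj a₂ * z)) := by
  rw [blaschke, mul_div_assoc' z, div_mul_div_comm]

theorem blaschke_sub_eq (hq₁ : 1 - conj a₁ * z ≠ 0) (hq₂ : 1 - conj a₂ * z ≠ 0) :
    blaschke a₁ a₂ z - lam =
      blaschkeCubic a₁ a₂ lam z / ((1 - conj a₁ * z) * (1 - conj a₂ * z)) := by
  rw [blaschke_eq_div, div_sub' (mul_ne_zero hq₁ hq₂), blaschkeCubic, mul_comm lam]

theorem blaschke_ne_of_blaschkeCubic_ne_zero (hq₁ : 1 - conj a₁ * z ≠ 0)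
    (hq₂ : 1 - conj a₂ * z ≠ 0) (h : blaschkeCubic a₁ a₂ lam z ≠ 0) : blaschke a₁ a₂ z ≠ lam := by
  rw [← sub_ne_zero, blaschke_sub_eq hq₁ hq₂]
  exact div_ne_zero h (mul_ne_zero hq₁ hq₂)

theorem blaschke_div_eq (hq₁ : 1 - conj a₁ * z ≠ 0) (hq₂ : 1 - conj a₂ * z ≠ 0) (hz : z ≠ 0) :
    blaschke a₁ a₂ z / (z * (blaschke a₁ a₂ z - lam)) =
      (z - a₁) * (z - a₂) / blaschkeCubic a₁ a₂ lam z := by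
  rw [blaschke_sub_eq hq₁ hq₂, blaschke_eq_div, mul_div_assoc',
    div_div_div_cancel_right₀ (mul_ne_zero hq₁ hq₂), mul_assoc, mul_div_mul_left _ _ hz]

-- If a denominator vanished, `blaschke a₁ a₂ z` would be the junk value `0`, not `lam`.
theorem blaschkeCubic_eq_zero_of_blaschke_eq (hlam : lam ≠ 0) (h : blaschke a₁ a₂ z = lam) :
    blaschkeCubic a₁ a₂ lam z = 0 := by
  have hq₁ : 1 - conj a₁ * z ≠ 0 := by
    rintro h₀; apply hlam; rw [← h, blaschke, h₀]; simp
  have hq₂ : 1 - conj a₂ * z ≠ 0 := by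
    rintro h₀; apply hlam; rw [← h, blaschke, h₀]; simp
  have := blaschke_sub_eq (lam := lam) hq₁ hq₂
  rw [h, sub_self, eq_comm, div_eq_zero_iff] at this
  exact this.resolve_right (mul_ne_zero hq₁ hq₂)

theorem blaschkeCubic_eq (a₁ a₂ lam z : ℂ) :
    blaschkeCubic a₁ a₂ lam z = z ^ 3 - (a₁ + a₂ + lam * conj a₁ * conj a₂) * z ^ 2
      + (a₁ * a₂ + lam * (conj a₁ + conj a₂)) * z - lam := by
  unfold blaschkeCubic; ring

theorem blaschkeCubicDeriv_eq (hz : z * conj z = 1) (ha₁ : z ≠ a₁) (ha₂ : z ≠ a₂)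
    (h : blaschkeCubic a₁ a₂ lam z = 0) :
    blaschkeCubicDeriv a₁ a₂ lam z =
      ((1 + (1 - normSq a₁) / normSq (z - a₁) + (1 - normSq a₂) / normSq (z - a₂) : ℝ) : ℂ)
        * ((z - a₁) * (z - a₂)) := by
  rw [blaschkeCubic, sub_eq_zero] at h
  have t₁ := one_sub_normSq_div_normSq_sub_mul hz ha₁ h
  have t₂ := one_sub_normSq_div_normSq_sub_mul (b := a₁) (lam := lam) hz ha₂
    (by linear_combination h)
  unfold blaschkeCubicDeriv
  push_cast
  linear_combination -t₁ - t₂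

theorem mem_Ioo_of_mul_blaschkeCubicDeriv_eq (ha₁ : ‖a₁‖ < 1) (ha₂ : ‖a₂‖ < 1)
    (hlam : ‖lam‖ = 1) (h : blaschkeCubic a₁ a₂ lam z = 0) {m : ℝ}
    (hm : (m : ℂ) * blaschkeCubicDeriv a₁ a₂ lam z = (z - a₁) * (z - a₂)) :
    0 < m ∧ m < 1 := by
  have hnormSq {a : ℂ} (ha : ‖a‖ < 1) : normSq a < 1 := by
    rw [normSq_eq_norm_sq]; exact pow_lt_one₀ (norm_nonneg a) ha two_ne_zero
  have hz : normSq z = 1 := normSq_eq_one_of_mul_eq (hnormSq ha₁) (hnormSq ha₂)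
    (by rw [normSq_eq_norm_sq, hlam, one_pow]) (sub_eq_zero.mp h)
  have hne {a : ℂ} (ha : ‖a‖ < 1) : z ≠ a := by rintro rfl; linarith [hnormSq ha]
  have hpos {a : ℂ} (ha : ‖a‖ < 1) : 0 < (1 - normSq a) / normSq (z - a) :=
    div_pos (sub_pos.mpr (hnormSq ha)) (normSq_pos.mpr (sub_ne_zero.mpr (hne ha)))
  rw [blaschkeCubicDeriv_eq (by rw [mul_conj, hz]; rfl) (hne ha₁) (hne ha₂) h] at hm
  set w := 1 + (1 - normSq a₁) / normSq (z - a₁) + (1 - normSq a₂) / normSq (z - a₂)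
  have hw : 1 < w := by linarith [hpos ha₁, hpos ha₂]
  have hN : (z - a₁) * (z - a₂) ≠ 0 :=
    mul_ne_zero (sub_ne_zero.mpr (hne ha₁)) (sub_ne_zero.mpr (hne ha₂))
  have hmw : ((m * w : ℝ) : ℂ) * ((z - a₁) * (z - a₂)) = 1 * ((z - a₁) * (z - a₂)) := by
    push_cast; linear_combination hm
  replace hmw : m * w = 1 := by exact_mod_cast mul_right_cancel₀ hN hmw
  rw [eq_inv_of_mul_eq_one_left hmw]
  exact ⟨inv_pos.mpr (by linarith), inv_lt_one_of_one_lt₀ hw⟩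

variable {z₁ z₂ z₃ : ℂ}

theorem blaschkeCubic_eq_prod (hz₁₂ : z₁ ≠ z₂) (hz₁₃ : z₁ ≠ z₃) (hz₂₃ : z₂ ≠ z₃)
    (h₁ : blaschkeCubic a₁ a₂ lam z₁ = 0) (h₂ : blaschkeCubic a₁ a₂ lam z₂ = 0)
    (h₃ : blaschkeCubic a₁ a₂ lam z₃ = 0) (w : ℂ) :
    blaschkeCubic a₁ a₂ lam w = (w - z₁) * (w - z₂) * (w - z₃) := by
  rw [blaschkeCubic_eq] at *
  obtain ⟨e₁, e₂, e₃⟩ := vieta_of_three_roots hz₁₂ hz₁₃ hz₂₃ h₁ h₂ h₃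
  linear_combination w ^ 2 * e₁ - w * e₂ + e₃

theorem blaschkeCubicDeriv_eq_prod (hz₁₂ : z₁ ≠ z₂) (hz₁₃ : z₁ ≠ z₃) (hz₂₃ : z₂ ≠ z₃)
    (h₁ : blaschkeCubic a₁ a₂ lam z₁ = 0) (h₂ : blaschkeCubic a₁ a₂ lam z₂ = 0)
    (h₃ : blaschkeCubic a₁ a₂ lam z₃ = 0) :
    blaschkeCubicDeriv a₁ a₂ lam z₁ = (z₁ - z₂) * (z₁ - z₃) := by
  rw [blaschkeCubic_eq] at *
  obtain ⟨e₁, e₂, -⟩ := vieta_of_three_roots hz₁₂ hz₁₃ hz₂₃ h₁ h₂ h₃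
  unfold blaschkeCubicDeriv
  linear_combination 2 * z₁ * e₁ - e₂

end Blaschke

theorem blaschke_deg3_partial_fraction_weights (a₁ a₂ : ℂ)
    (ha₁ : ‖a₁‖ < 1) (ha₂ : ‖a₂‖ < 1)
    (B : ℂ → ℂ)
    (hB : ∀ z, B z = z * ((z - a₁) / (1 - (starRingEnd ℂ) a₁ * z)) *
      ((z - a₂) / (1 - (starRingEnd ℂ) a₂ * z)))
    (lam : ℂ) (hlam : ‖lam‖ = 1)
    (z₁ z₂ z₃ : ℂ)
    (hz : z₁ ≠ z₂ ∧ z₂ ≠ z₃ ∧ z₁ ≠ z₃)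
    (h₁ : B z₁ = lam) (h₂ : B z₂ = lam) (h₃ : B z₃ = lam)
    (m₁ m₂ m₃ : ℝ)
    (hm : ∀ z : ℂ, z ≠ z₁ → z ≠ z₂ → z ≠ z₃ → z ≠ 0 →
      1 - (starRingEnd ℂ) a₁ * z ≠ 0 → 1 - (starRingEnd ℂ) a₂ * z ≠ 0 →
      B z ≠ lam →
      B z / (z * (B z - lam)) =
        (m₁ : ℂ) / (z - z₁) + (m₂ : ℂ) / (z - z₂) + (m₃ : ℂ) / (z - z₃)) :
    m₁ + m₂ + m₃ = 1 ∧ (0 < m₁ ∧ m₁ < 1) ∧ (0 < m₂ ∧ m₂ < 1) ∧ (0 < m₃ ∧ m₃ < 1) := by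
  obtain rfl : B = blaschke a₁ a₂ := funext hB
  obtain ⟨hz₁₂, hz₂₃, hz₁₃⟩ := hz
  have hlam0 : lam ≠ 0 := by rintro rfl; simp at hlam
  replace h₁ := blaschkeCubic_eq_zero_of_blaschke_eq hlam0 h₁
  replace h₂ := blaschkeCubic_eq_zero_of_blaschke_eq hlam0 h₂
  replace h₃ := blaschkeCubic_eq_zero_of_blaschke_eq hlam0 h₃
  have hprod := blaschkeCubic_eq_prod hz₁₂ hz₁₃ hz₂₃ h₁ h₂ h₃
  have hnum : ∀ w ∉ ({z₁, z₂, z₃, 0, (conj a₁)⁻¹, (conj a₂)⁻¹} : Set ℂ),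
      ((m₁ + m₂ + m₃ : ℂ) - 1) * w ^ 2
        + (a₁ + a₂ - (m₁ * (z₂ + z₃) + m₂ * (z₁ + z₃) + m₃ * (z₁ + z₂))) * w
        + (m₁ * z₂ * z₃ + m₂ * z₁ * z₃ + m₃ * z₁ * z₂ - a₁ * a₂) = 0 := by
    intro w hw
    simp only [Set.mem_insert_iff, Set.mem_singleton_iff, not_or] at hw
    obtain ⟨hw₁, hw₂, hw₃, hw₀, hc₁, hc₂⟩ := hw
    have hq₁ := one_sub_mul_ne_zero_of_ne_inv hc₁
    have hq₂ := one_sub_mul_ne_zero_of_ne_inv hc₂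
    have hP : blaschkeCubic a₁ a₂ lam w ≠ 0 := by rw [hprod]; simp [sub_eq_zero, *]
    have h := hm w hw₁ hw₂ hw₃ hw₀ hq₁ hq₂ (blaschke_ne_of_blaschkeCubic_ne_zero hq₁ hq₂ hP)
    rw [blaschke_div_eq hq₁ hq₂ hw₀, hprod] at h
    linear_combination -numerator_eq_of_eq_partial_fractions hw₁ hw₂ hw₃ h
  obtain ⟨hα, hβ, hγ⟩ := quadratic_coeffs_eq_zero_of_finite (Set.toFinite _) hnum
  refine ⟨by exact_mod_cast sub_eq_zero.mp hα, ?_, ?_, ?_⟩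
  · refine mem_Ioo_of_mul_blaschkeCubicDeriv_eq ha₁ ha₂ hlam h₁ ?_
    rw [blaschkeCubicDeriv_eq_prod hz₁₂ hz₁₃ hz₂₃ h₁ h₂ h₃]
    linear_combination z₁ ^ 2 * hα + z₁ * hβ + hγ
  · refine mem_Ioo_of_mul_blaschkeCubicDeriv_eq ha₁ ha₂ hlam h₂ ?_
    rw [blaschkeCubicDeriv_eq_prod hz₁₂.symm hz₂₃ hz₁₃ h₂ h₁ h₃]
    linear_combination z₂ ^ 2 * hα + z₂ * hβ + hγ
  · refine mem_Ioo_of_mul_blaschkeCubicDeriv_eq ha₁ ha₂ hlam h₃ ?_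
    rw [blaschkeCubicDeriv_eq_prod hz₁₃.symm hz₂₃.symm hz₁₂ h₃ h₁ h₂]
    linear_combination z₃ ^ 2 * hα + z₃ * hβ + hγ
end

section
/- Siebeck's theorem, degree 3 case (Marden's theorem ingredient): Let z_1, z_2, z_3 be distinct complex numbers and m_1, m_2, m_3 > 0 with m_1 + m_2 + m_3 = 1. Let z_1', z_2' be the zeros of F(z) = m_1/(z - z_1) + m_2/(z - z_2) + m_3/(z - z_3). Then the point ζ_3 = (m_1 z_2 + m_2 z_1)/(m_1 + m_2) satisfies |ζ_3 - z_1'| + |ζ_3 - z_2'| = |ζ_1 - z_1'| + |ζ_1 - z_2'| = |ζ_2 - z_1'| + |ζ_2 - z_2'|, where ζ_1 = (m_2 z_3 + m_3 z_2)/(m_2 + m_3) and ζ_2 = (m_3 z_1 + m_1 z_3)/(m_3 + m_1); i.e., the three division points lie on a common ellipse with foci z_1' and z_2'. -/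
open Complex Polynomial

/-!
Clearing denominators, `q(z) = (z - z₁')(z - z₂') = ∑ mᵢ ∏_{j ≠ i} (z - zⱼ)`, so
`z₁' + z₂' = ∑ mᵢ (zⱼ + zₖ)`. By the parallelogram law, for every `ζ`,
`(|ζ - z₁'| + |ζ - z₂'|)² = (|2ζ - (z₁' + z₂')|² + |z₁' - z₂'|²) / 2 + 2 |q(ζ)|`.
At `ζ₃` the `m₁`- and `m₂`-terms of `q` cancel, so `q(ζ₃) = -m₁m₂m₃ (z₁ - z₂)² / (m₁ + m₂)²`, and
the right-hand side becomes `½ ∑_cyc (mₖ - mᵢmⱼ) |zᵢ - zⱼ|² + |z₁' - z₂'|² / 2`. This is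
invariant under cyclic relabelling, which carries `ζ₃` to `ζ₁` and `ζ₂`.
-/

theorem sq_norm_sub_add_norm_sub (ζ a b : ℂ) :
    (‖ζ - a‖ + ‖ζ - b‖) ^ 2 =
      (normSq (2 * ζ - (a + b)) + normSq (a - b)) / 2 + 2 * ‖(ζ - a) * (ζ - b)‖ := by
  rw [add_sq, Complex.sq_norm, Complex.sq_norm, norm_mul]
  simp only [normSq_apply, sub_re, sub_im, mul_re, mul_im, add_re, add_im]
  norm_num
  ring

theorem sub_mul_sub_eq_of_partial_fractions {z₁ z₂ z₃ a b m₁ m₂ m₃ : ℂ}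
    (hF : ∀ z : ℂ, z ≠ z₁ → z ≠ z₂ → z ≠ z₃ →
      m₁ / (z - z₁) + m₂ / (z - z₂) + m₃ / (z - z₃) =
        (z - a) * (z - b) / ((z - z₁) * (z - z₂) * (z - z₃))) (z : ℂ) :
    (z - a) * (z - b) =
      m₁ * (z - z₂) * (z - z₃) + m₂ * (z - z₁) * (z - z₃) + m₃ * (z - z₁) * (z - z₂) := by
  have hpoly : (X - C a) * (X - C b) =
      C m₁ * (X - C z₂) * (X - C z₃) + C m₂ * (X - C z₁) * (X - C z₃) +
        C m₃ * (X - C z₁) * (X - C z₂) := by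
    refine eq_of_infinite_eval_eq _ _ <| (Set.toFinite {z₁, z₂, z₃}).infinite_compl.mono ?_
    intro w hw
    simp only [Set.mem_compl_iff, Set.mem_insert_iff, Set.mem_singleton_iff, not_or] at hw
    obtain ⟨h₁, h₂, h₃⟩ := hw
    have hw := hF w h₁ h₂ h₃
    have := sub_ne_zero.2 h₁; have := sub_ne_zero.2 h₂; have := sub_ne_zero.2 h₃
    field_simp at hw
    simp only [Set.mem_ofPred_eq, eval_mul, eval_add, eval_sub, eval_X, eval_C]
    linear_combination -hw
  simpa using congrArg (eval z) hpoly

noncomputable def siebeckInvariant (m₁ m₂ m₃ : ℝ) (z₁ z₂ z₃ : ℂ) : ℝ :=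
  ((m₃ - m₁ * m₂) * normSq (z₁ - z₂) + (m₁ - m₂ * m₃) * normSq (z₂ - z₃) +
    (m₂ - m₃ * m₁) * normSq (z₃ - z₁)) / 2

theorem siebeckInvariant_rotate (m₁ m₂ m₃ : ℝ) (z₁ z₂ z₃ : ℂ) :
    siebeckInvariant m₂ m₃ m₁ z₂ z₃ z₁ = siebeckInvariant m₁ m₂ m₃ z₁ z₂ z₃ := by
  unfold siebeckInvariant; ring

section DivisionPoint

variable {m₁ m₂ m₃ : ℝ} {z₁ z₂ z₃ a b : ℂ}

theorem normSq_divisionPoint_add_eq_siebeckInvariant (hsum : m₁ + m₂ + m₃ = 1)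
    (h₁₂ : m₁ + m₂ ≠ 0) :
    normSq (2 * ((m₁ * z₂ + m₂ * z₁) / (m₁ + m₂)) -
        (m₁ * (z₂ + z₃) + m₂ * (z₁ + z₃) + m₃ * (z₁ + z₂))) / 2 +
      2 * (m₁ * m₂ * m₃ / (m₁ + m₂) ^ 2 * normSq (z₁ - z₂)) =
      siebeckInvariant m₁ m₂ m₃ z₁ z₂ z₃ := by
  have h₁₂' : (m₁ : ℂ) + m₂ ≠ 0 := by exact_mod_cast h₁₂
  obtain rfl : m₃ = 1 - m₁ - m₂ := by linarith
  apply Complex.ofReal_injective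
  unfold siebeckInvariant
  push_cast
  simp only [← Complex.mul_conj, map_sub, map_add, map_mul, map_div₀, Complex.conj_ofReal,
    map_ofNat, map_one]
  field_simp
  ring

theorem divisionPoint_sub_mul_sub (h₁₂ : m₁ + m₂ ≠ 0)
    (hP : ∀ z : ℂ, (z - a) * (z - b) =
      m₁ * (z - z₂) * (z - z₃) + m₂ * (z - z₁) * (z - z₃) + m₃ * (z - z₁) * (z - z₂)) :
    ((m₁ * z₂ + m₂ * z₁) / (m₁ + m₂) - a) * ((m₁ * z₂ + m₂ * z₁) / (m₁ + m₂) - b) =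
      -((m₁ * m₂ * m₃ / (m₁ + m₂) ^ 2 : ℝ) : ℂ) * (z₁ - z₂) ^ 2 := by
  have h₁₂' : (m₁ : ℂ) + m₂ ≠ 0 := by exact_mod_cast h₁₂
  -- `m₁ (ζ - z₂) + m₂ (ζ - z₁) = 0`, so only the `m₃`-term survives
  rw [hP]
  push_cast
  field_simp
  ring

theorem norm_sub_add_norm_sub_eq_sqrt (hm₁ : 0 < m₁) (hm₂ : 0 < m₂) (hm₃ : 0 < m₃)
    (hsum : m₁ + m₂ + m₃ = 1)
    (hP : ∀ z : ℂ, (z - a) * (z - b) =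
      m₁ * (z - z₂) * (z - z₃) + m₂ * (z - z₁) * (z - z₃) + m₃ * (z - z₁) * (z - z₂))
    {ζ : ℂ} (hζ : ζ = (m₁ * z₂ + m₂ * z₁) / (m₁ + m₂)) :
    ‖ζ - a‖ + ‖ζ - b‖ = √(siebeckInvariant m₁ m₂ m₃ z₁ z₂ z₃ + normSq (a - b) / 2) := by
  have hsumC : (m₁ : ℂ) + m₂ + m₃ = 1 := by exact_mod_cast hsum
  have h₁₂ : m₁ + m₂ ≠ 0 := by positivity
  have hab : a + b = m₁ * (z₂ + z₃) + m₂ * (z₁ + z₃) + m₃ * (z₁ + z₂) := by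
    -- Vieta: compare the identity at `z = 0` and `z = 1`
    linear_combination hP 0 - hP 1 - hsumC
  have hprod : ‖(ζ - a) * (ζ - b)‖ = m₁ * m₂ * m₃ / (m₁ + m₂) ^ 2 * normSq (z₁ - z₂) := by
    rw [hζ, divisionPoint_sub_mul_sub h₁₂ hP, norm_mul, norm_neg, norm_real,
      Real.norm_of_nonneg (by positivity), norm_pow, Complex.sq_norm]
  have hsq : (‖ζ - a‖ + ‖ζ - b‖) ^ 2 =
      siebeckInvariant m₁ m₂ m₃ z₁ z₂ z₃ + normSq (a - b) / 2 := by
    rw [sq_norm_sub_add_norm_sub, hprod, hab, hζ,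
      ← normSq_divisionPoint_add_eq_siebeckInvariant hsum h₁₂]
    ring
  rw [← hsq, Real.sqrt_sq (by positivity)]

end DivisionPoint

theorem siebeck_deg3_general (z₁ z₂ z₃ : ℂ)
    (m₁ m₂ m₃ : ℝ) (hm₁ : 0 < m₁) (hm₂ : 0 < m₂) (hm₃ : 0 < m₃)
    (hsum : m₁ + m₂ + m₃ = 1)
    (z₁' z₂' : ℂ)
    (hF : ∀ z : ℂ, z ≠ z₁ → z ≠ z₂ → z ≠ z₃ →
      (m₁ : ℂ) / (z - z₁) + (m₂ : ℂ) / (z - z₂) + (m₃ : ℂ) / (z - z₃) =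
        (z - z₁') * (z - z₂') / ((z - z₁) * (z - z₂) * (z - z₃)))
    (ζ₁ ζ₂ ζ₃ : ℂ)
    (hζ₁ : ζ₁ = ((m₂ : ℂ) * z₃ + (m₃ : ℂ) * z₂) / ((m₂ : ℂ) + (m₃ : ℂ)))
    (hζ₂ : ζ₂ = ((m₃ : ℂ) * z₁ + (m₁ : ℂ) * z₃) / ((m₃ : ℂ) + (m₁ : ℂ)))
    (hζ₃ : ζ₃ = ((m₁ : ℂ) * z₂ + (m₂ : ℂ) * z₁) / ((m₁ : ℂ) + (m₂ : ℂ))) :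
    ‖ζ₃ - z₁'‖ + ‖ζ₃ - z₂'‖ =
      ‖ζ₁ - z₁'‖ + ‖ζ₁ - z₂'‖ ∧
    ‖ζ₁ - z₁'‖ + ‖ζ₁ - z₂'‖ =
      ‖ζ₂ - z₁'‖ + ‖ζ₂ - z₂'‖ := by
  have hP := sub_mul_sub_eq_of_partial_fractions hF
  have hP₂₃₁ : ∀ z : ℂ, (z - z₁') * (z - z₂') =
      m₂ * (z - z₃) * (z - z₁) + m₃ * (z - z₂) * (z - z₁) + m₁ * (z - z₂) * (z - z₃) :=
    fun z => by rw [hP]; ring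
  have hP₃₁₂ : ∀ z : ℂ, (z - z₁') * (z - z₂') =
      m₃ * (z - z₁) * (z - z₂) + m₁ * (z - z₃) * (z - z₂) + m₂ * (z - z₃) * (z - z₁) :=
    fun z => by rw [hP]; ring
  rw [norm_sub_add_norm_sub_eq_sqrt hm₁ hm₂ hm₃ hsum hP hζ₃,
    norm_sub_add_norm_sub_eq_sqrt hm₂ hm₃ hm₁ (by linarith) hP₂₃₁ hζ₁,
    norm_sub_add_norm_sub_eq_sqrt hm₃ hm₁ hm₂ (by linarith) hP₃₁₂ hζ₂,
    siebeckInvariant_rotate, siebeckInvariant_rotate]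
  exact ⟨rfl, rfl⟩

theorem siebeck_deg3 (z₁ z₂ z₃ : ℂ)
    (hdist : z₁ ≠ z₂ ∧ z₂ ≠ z₃ ∧ z₁ ≠ z₃)
    (hcol : ¬ Collinear ℝ ({z₁, z₂, z₃} : Set ℂ))
    (m₁ m₂ m₃ : ℝ) (hm₁ : 0 < m₁) (hm₂ : 0 < m₂) (hm₃ : 0 < m₃)
    (hsum : m₁ + m₂ + m₃ = 1)
    (z₁' z₂' : ℂ)
    (hF : ∀ z : ℂ, z ≠ z₁ → z ≠ z₂ → z ≠ z₃ →
      (m₁ : ℂ) / (z - z₁) + (m₂ : ℂ) / (z - z₂) + (m₃ : ℂ) / (z - z₃) =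
        (z - z₁') * (z - z₂') / ((z - z₁) * (z - z₂) * (z - z₃)))
    (ζ₁ ζ₂ ζ₃ : ℂ)
    (hζ₁ : ζ₁ = ((m₂ : ℂ) * z₃ + (m₃ : ℂ) * z₂) / ((m₂ : ℂ) + (m₃ : ℂ)))
    (hζ₂ : ζ₂ = ((m₃ : ℂ) * z₁ + (m₁ : ℂ) * z₃) / ((m₃ : ℂ) + (m₁ : ℂ)))
    (hζ₃ : ζ₃ = ((m₁ : ℂ) * z₂ + (m₂ : ℂ) * z₁) / ((m₁ : ℂ) + (m₂ : ℂ))) :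
    ‖ζ₃ - z₁'‖ + ‖ζ₃ - z₂'‖ =
      ‖ζ₁ - z₁'‖ + ‖ζ₁ - z₂'‖ ∧
    ‖ζ₁ - z₁'‖ + ‖ζ₁ - z₂'‖ =
      ‖ζ₂ - z₁'‖ + ‖ζ₂ - z₂'‖ :=
  siebeck_deg3_general z₁ z₂ z₃ m₁ m₂ m₃ hm₁ hm₂ hm₃ hsum z₁' z₂' hF ζ₁ ζ₂ ζ₃ hζ₁ hζ₂ hζ₃
end

section
/- For a canonical Blaschke product B of degree 2 with zeros 0 and a_1 ≠ 0: if z_1 ≠ z_2 lie on the unit circle, B(z_1) = B(z_2), and z is the intersection of the tangent lines to the unit circle at z_1 and z_2, then conj(a_1) z + a_1 conj(z) = 2. -/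
/-!
On the unit circle `conj w = w⁻¹`, so the tangent lines at `z₁` and `z₂` meet at
`z = 2 z₁ z₂ / (z₁ + z₂)`, with `conj z = 2 / (z₁ + z₂)`. Cancelling the factor `z₁ - z₂` from
`B z₁ = B z₂` leaves `z₁ + z₂ = a₁ + conj a₁ z₁ z₂`, and substituting gives
`conj a₁ z + a₁ conj z = 2 (conj a₁ z₁ z₂ + a₁) / (z₁ + z₂) = 2`.
-/

open Complex

lemma one_sub_conj_mul_ne_zero_s12 {a w : ℂ} (ha : ‖a‖ < 1) (hw : ‖w‖ ≤ 1) :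
    1 - (starRingEnd ℂ) a * w ≠ 0 := by
  intro h
  have hnorm : ‖(starRingEnd ℂ) a * w‖ = 1 := by rw [← sub_eq_zero.mp h, norm_one]
  rw [norm_mul, Complex.norm_conj] at hnorm
  nlinarith [norm_nonneg a, norm_nonneg w]

lemma add_eq_of_mul_sub_div_eq {a c z₁ z₂ : ℂ} (hd₁ : 1 - c * z₁ ≠ 0) (hd₂ : 1 - c * z₂ ≠ 0)
    (hne : z₁ ≠ z₂) (heq : z₁ * (z₁ - a) / (1 - c * z₁) = z₂ * (z₂ - a) / (1 - c * z₂)) :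
    z₁ + z₂ = a + c * z₁ * z₂ := by
  rw [div_eq_div_iff hd₁ hd₂] at heq
  exact mul_left_cancel₀ (sub_ne_zero.mpr hne) (by linear_combination heq)

lemma conj_mul_self_of_norm_eq_one {w : ℂ} (hw : ‖w‖ = 1) : (starRingEnd ℂ) w * w = 1 := by
  rw [Complex.conj_mul', hw]; norm_num

lemma tangent_lines_inter {z₁ z₂ z : ℂ} (hz₁ : ‖z₁‖ = 1) (hz₂ : ‖z₂‖ = 1) (hne : z₁ ≠ z₂)
    (ht₁ : (starRingEnd ℂ) z₁ * z + z₁ * (starRingEnd ℂ) z = 2)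
    (ht₂ : (starRingEnd ℂ) z₂ * z + z₂ * (starRingEnd ℂ) z = 2) :
    (z₁ + z₂) * (starRingEnd ℂ) z = 2 ∧ (z₁ + z₂) * z = 2 * z₁ * z₂ := by
  have hw₁ := conj_mul_self_of_norm_eq_one hz₁
  have hw₂ := conj_mul_self_of_norm_eq_one hz₂
  have hconj : (z₁ + z₂) * (starRingEnd ℂ) z = 2 :=
    mul_left_cancel₀ (sub_ne_zero.mpr hne)
      (by linear_combination z₁ * ht₁ - z₂ * ht₂ - z * hw₁ + z * hw₂)
  refine ⟨hconj, ?_⟩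
  linear_combination (z₁ + z₂) * z₁ * ht₁ - (z₁ + z₂) * z * hw₁ - z₁ ^ 2 * hconj

theorem exterior_line_deg2_general (a₁ : ℂ)
    (ha₁' : ‖a₁‖ < 1)
    (B : ℂ → ℂ)
    (hB : ∀ z, B z = z * (z - a₁) / (1 - (starRingEnd ℂ) a₁ * z))
    (z₁ z₂ z : ℂ) (hz₁ : ‖z₁‖ = 1) (hz₂ : ‖z₂‖ = 1)
    (hne : z₁ ≠ z₂) (heq : B z₁ = B z₂)
    (ht₁ : (starRingEnd ℂ) z₁ * z + z₁ * (starRingEnd ℂ) z = 2)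
    (ht₂ : (starRingEnd ℂ) z₂ * z + z₂ * (starRingEnd ℂ) z = 2) :
    (starRingEnd ℂ) a₁ * z + a₁ * (starRingEnd ℂ) z = 2 := by
  rw [hB, hB] at heq
  have hsum := add_eq_of_mul_sub_div_eq (one_sub_conj_mul_ne_zero_s12 ha₁' hz₁.le)
    (one_sub_conj_mul_ne_zero_s12 ha₁' hz₂.le) hne heq
  obtain ⟨hconj, hz⟩ := tangent_lines_inter hz₁ hz₂ hne ht₁ ht₂
  have hs : z₁ + z₂ ≠ 0 := by
    rintro h
    rw [h, zero_mul] at hconj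
    norm_num at hconj
  exact mul_left_cancel₀ hs
    (by linear_combination (starRingEnd ℂ) a₁ * hz + a₁ * hconj - 2 * hsum)

theorem exterior_line_deg2 (a₁ : ℂ) (ha₁ : 0 < ‖a₁‖)
    (ha₁' : ‖a₁‖ < 1)
    (B : ℂ → ℂ)
    (hB : ∀ z, B z = z * (z - a₁) / (1 - (starRingEnd ℂ) a₁ * z))
    (z₁ z₂ z : ℂ) (hz₁ : ‖z₁‖ = 1) (hz₂ : ‖z₂‖ = 1)
    (hne : z₁ ≠ z₂) (heq : B z₁ = B z₂)
    (ht₁ : (starRingEnd ℂ) z₁ * z + z₁ * (starRingEnd ℂ) z = 2)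
    (ht₂ : (starRingEnd ℂ) z₂ * z + z₂ * (starRingEnd ℂ) z = 2) :
    (starRingEnd ℂ) a₁ * z + a₁ * (starRingEnd ℂ) z = 2 :=
  exterior_line_deg2_general a₁ ha₁' B hB z₁ z₂ z hz₁ hz₂ hne heq ht₁ ht₂
end

section
/- For a canonical Blaschke product B of degree 2 with zeros 0 and a_1, two distinct points z_1, z_2 on the unit circle satisfy B(z_1) = B(z_2) if and only if z_1 + z_2 = a_1 + conj(a_1) z_1 z_2. -/
open Complex

theorem blaschke_deg2_same_value_iff (a₁ : ℂ) (ha₁ : ‖a₁‖ < 1)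
    (B : ℂ → ℂ)
    (hB : ∀ z, B z = z * (z - a₁) / (1 - (starRingEnd ℂ) a₁ * z))
    (z₁ z₂ : ℂ) (hz₁ : ‖z₁‖ = 1) (hz₂ : ‖z₂‖ = 1)
    (hne : z₁ ≠ z₂) :
    B z₁ = B z₂ ↔ z₁ + z₂ = a₁ + (starRingEnd ℂ) a₁ * (z₁ * z₂) := by
  have hd : ∀ z : ℂ, ‖z‖ = 1 → 1 - (starRingEnd ℂ) a₁ * z ≠ 0 := by
    intro z hz h
    have h1 : (starRingEnd ℂ) a₁ * z = 1 := by linear_combination -h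
    have : ‖(starRingEnd ℂ) a₁ * z‖ = 1 := by rw [h1]; simp
    rw [norm_mul, Complex.norm_conj, hz, mul_one] at this
    linarith
  have h1 := hd z₁ hz₁
  have h2 := hd z₂ hz₂
  rw [hB, hB, div_eq_div_iff h1 h2]
  constructor
  · intro h
    have key : (z₁ - z₂) * (z₁ + z₂ - a₁ - (starRingEnd ℂ) a₁ * (z₁ * z₂)) = 0 := by
      linear_combination h
    rcases mul_eq_zero.mp key with h' | h'
    · exact absurd (sub_eq_zero.mp h') hne
    · linear_combination h'
  · intro h
    linear_combination (z₁ - z₂) * h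
end

section
/- If 0 < a, b < 1 and a³b³ − 2a²b² − (a² + b²) + 3ab = 0, then the chord joining any two distinct unit-circle preimages z_1, z_2 of a common value λ (|λ|=1) under B(z) = z·(z²−a)/(1−az²)·(z²−b)/(1−bz²) is tangent to the union of the two ellipses (4b/(a(b+1)²))x² + (4b/(a(b−1)²))y² = 1 and (4a/(b(a+1)²))x² + (4a/(b(a−1)²))y² = 1 (with z = x + iy). -/
/-!
Write c = z₁z₂ and s = z₁ + z₂. Under the relation between a and b, clearing denominators in
B(z₁) = B(z₂) gives (z₁ - z₂) · T(a, b) · T(b, a) = 0 with T(a, b) = a(c + b)(bc + 1) - bs².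
On the chord w + c·w̄ = s one has 2c·Re w = cw + s - w and 2ic·Im w = cw + w - s, so the equation
of the ellipse with parameters (a, b) becomes a quadratic equation in w; when T(a, b) = 0 it is a
nonzero multiple of (2bsw - a((b² + 1)c + 2b))², so the chord meets that ellipse in exactly one
point.
-/

open Complex ComplexConjugate

theorem one_sub_mul_sq_ne_zero {r z : ℂ} (hr : ‖r‖ ≠ 1) (hz : ‖z‖ = 1) : 1 - r * z ^ 2 ≠ 0 := by
  intro h
  apply hr
  simpa [norm_mul, norm_pow, hz] using congrArg norm (sub_eq_zero.mp h).symm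

theorem blaschke_cross_difference_eq {R : Type*} [CommRing R] (a b z w : R) :
    a * b * (z * ((z ^ 2 - a) * (z ^ 2 - b)) * ((1 - a * w ^ 2) * (1 - b * w ^ 2)) -
        w * ((w ^ 2 - a) * (w ^ 2 - b)) * ((1 - a * z ^ 2) * (1 - b * z ^ 2))) =
      (z - w) * ((a * (z * w + b) * (b * (z * w) + 1) - b * (z + w) ^ 2) *
        (b * (z * w + a) * (a * (z * w) + 1) - a * (z + w) ^ 2)) -
      (z - w) * z * w * (z + w) ^ 2 *
        (a ^ 3 * b ^ 3 - 2 * a ^ 2 * b ^ 2 - (a ^ 2 + b ^ 2) + 3 * a * b) := by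
  ring

theorem tangency_of_blaschke_eq {a b z w : ℂ}
    (hab : a ^ 3 * b ^ 3 - 2 * a ^ 2 * b ^ 2 - (a ^ 2 + b ^ 2) + 3 * a * b = 0)
    (ha : ‖a‖ ≠ 1) (hb : ‖b‖ ≠ 1) (hz : ‖z‖ = 1) (hw : ‖w‖ = 1) (hne : z ≠ w)
    (h : z * ((z ^ 2 - a) / (1 - a * z ^ 2)) * ((z ^ 2 - b) / (1 - b * z ^ 2)) =
      w * ((w ^ 2 - a) / (1 - a * w ^ 2)) * ((w ^ 2 - b) / (1 - b * w ^ 2))) :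
    a * (z * w + b) * (b * (z * w) + 1) = b * (z + w) ^ 2 ∨
      b * (z * w + a) * (a * (z * w) + 1) = a * (z + w) ^ 2 := by
  rw [mul_assoc, mul_assoc, div_mul_div_comm, div_mul_div_comm, ← mul_div_assoc, ← mul_div_assoc,
    div_eq_div_iff (mul_ne_zero (one_sub_mul_sq_ne_zero ha hz) (one_sub_mul_sq_ne_zero hb hz))
      (mul_ne_zero (one_sub_mul_sq_ne_zero ha hw) (one_sub_mul_sq_ne_zero hb hw))] at h
  have hprod := blaschke_cross_difference_eq a b z w
  rw [h, sub_self, mul_zero, hab, mul_zero, sub_zero, eq_comm] at hprod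
  simpa [sub_eq_zero, hne] using hprod

theorem mul_mul_conj_add_eq_add {z w : ℂ} (hz : ‖z‖ = 1) (hw : ‖w‖ = 1) :
    z * w * conj (z + w) = z + w := by
  have hz' : z * conj z = 1 := by simp [mul_conj', hz]
  have hw' : w * conj w = 1 := by simp [mul_conj', hw]
  rw [map_add]
  linear_combination w * hz' + z * hw'

theorem ellipse_eq_one_iff {a b x y : ℝ} (ha : a ≠ 0) (hb₁ : b + 1 ≠ 0) (hb₂ : b - 1 ≠ 0) :
    4 * b / (a * (b + 1) ^ 2) * x ^ 2 + 4 * b / (a * (b - 1) ^ 2) * y ^ 2 = 1 ↔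
      4 * b * (b - 1) ^ 2 * x ^ 2 + 4 * b * (b + 1) ^ 2 * y ^ 2 =
        a * (b + 1) ^ 2 * (b - 1) ^ 2 := by
  field_simp

section Tangency

variable {a b : ℝ} {c s w : ℂ}

theorem ellipse_eq_one_iff_of_mem_line (ha : a ≠ 0) (hb₁ : b + 1 ≠ 0) (hb₂ : b - 1 ≠ 0) (hc : c ≠ 0)
    (hw : w + c * conj w = s) :
    4 * b / (a * (b + 1) ^ 2) * w.re ^ 2 + 4 * b / (a * (b - 1) ^ 2) * w.im ^ 2 = 1 ↔
      b * (b - 1) ^ 2 * (c * w + s - w) ^ 2 - b * (b + 1) ^ 2 * (c * w + w - s) ^ 2 =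
        a * (b + 1) ^ 2 * (b - 1) ^ 2 * c ^ 2 := by
  have hre : c * w + s - w = 2 * c * w.re := by
    have h := add_conj w
    push_cast at h
    linear_combination c * h - hw
  have him : c * w + w - s = 2 * c * w.im * I := by
    have h := sub_conj w
    push_cast at h
    linear_combination c * h + hw
  have hscaled : b * (b - 1) ^ 2 * (2 * c * w.re) ^ 2 - b * (b + 1) ^ 2 * (2 * c * w.im * I) ^ 2 -
      a * (b + 1) ^ 2 * (b - 1) ^ 2 * c ^ 2 =
      c ^ 2 * ((4 * b * (b - 1) ^ 2 * w.re ^ 2 + 4 * b * (b + 1) ^ 2 * w.im ^ 2 -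
        a * (b + 1) ^ 2 * (b - 1) ^ 2 : ℝ) : ℂ) := by
    push_cast
    linear_combination -4 * b * (b + 1) ^ 2 * c ^ 2 * w.im ^ 2 * I_sq
  rw [ellipse_eq_one_iff ha hb₁ hb₂, hre, him,
    ← sub_eq_zero (b := (a : ℂ) * (b + 1) ^ 2 * (b - 1) ^ 2 * c ^ 2), hscaled,
    mul_eq_zero, or_iff_right (pow_ne_zero 2 hc), ofReal_eq_zero, sub_eq_zero]

theorem line_ellipse_quadratic_iff (hb : b ≠ 0) (hs : s ≠ 0) (hcb : c + b ≠ 0) (hbc : b * c + 1 ≠ 0)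
    (hT : a * (c + b) * (b * c + 1) = b * s ^ 2) :
    b * (b - 1) ^ 2 * (c * w + s - w) ^ 2 - b * (b + 1) ^ 2 * (c * w + w - s) ^ 2 =
        a * (b + 1) ^ 2 * (b - 1) ^ 2 * c ^ 2 ↔
      2 * b * s * w = a * ((b ^ 2 + 1) * c + 2 * b) := by
  have hsquare : (c + b) * (b * c + 1) * (2 * b * s * w - a * ((b ^ 2 + 1) * c + 2 * b)) ^ 2 =
      -b * s ^ 2 * (b * (b - 1) ^ 2 * (c * w + s - w) ^ 2 - b * (b + 1) ^ 2 * (c * w + w - s) ^ 2 -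
        a * (b + 1) ^ 2 * (b - 1) ^ 2 * c ^ 2) := by
    linear_combination (a * ((b ^ 2 + 1) * c + 2 * b) ^ 2 -
      4 * b * s * w * ((b ^ 2 + 1) * c + 2 * b) + 4 * b ^ 2 * s ^ 2) * hT
  rw [← sub_eq_zero, ← sub_eq_zero (a := 2 * b * s * w)]
  have hb' : (b : ℂ) ≠ 0 := ofReal_ne_zero.2 hb
  constructor
  · intro h
    simpa [h, hcb, hbc] using hsquare
  · intro h
    simpa [h, hb', hs] using hsquare.symm

theorem mem_line_of_mul_eq (hc : ‖c‖ = 1) (hs : c * conj s = s) (hb : b ≠ 0) (hs0 : s ≠ 0)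
    (hT : a * (c + b) * (b * c + 1) = b * s ^ 2)
    (hw : 2 * b * s * w = a * ((b ^ 2 + 1) * c + 2 * b)) :
    w + c * conj w = s := by
  have hcc : c * conj c = 1 := by simp [mul_conj', hc]
  have hw' := congrArg conj hw
  simp only [map_mul, map_add, map_pow, map_ofNat, map_one, conj_ofReal] at hw'
  refine mul_left_cancel₀ (mul_ne_zero (mul_ne_zero two_ne_zero (ofReal_ne_zero.2 hb)) hs0) ?_
  linear_combination hw + c ^ 2 * hw' - 2 * b * c * conj w * hs + 2 * hT +
    a * (b ^ 2 + 1) * c * hcc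

theorem existsUnique_mem_line_ellipse (ha : a ≠ 0) (hb : b ≠ 0) (hb₁ : |b| ≠ 1) (hc : ‖c‖ = 1)
    (hs : c * conj s = s) (hT : a * (c + b) * (b * c + 1) = b * s ^ 2) :
    ∃! w : ℂ, w + c * conj w = s ∧
      4 * b / (a * (b + 1) ^ 2) * w.re ^ 2 + 4 * b / (a * (b - 1) ^ 2) * w.im ^ 2 = 1 := by
  have hb_add : b + 1 ≠ 0 := fun h => hb₁ (by rw [eq_neg_of_add_eq_zero_left h]; norm_num)
  have hb_sub : b - 1 ≠ 0 := fun h => hb₁ (by rw [sub_eq_zero.mp h]; norm_num)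
  have hc0 : c ≠ 0 := norm_ne_zero_iff.mp (by rw [hc]; exact one_ne_zero)
  have hcb : c + b ≠ 0 := fun h => hb₁ (by simpa [eq_neg_of_add_eq_zero_left h] using hc)
  have hbc : b * c + 1 ≠ 0 := fun h => hb₁ (by
    simpa [hc] using congrArg norm (eq_neg_of_add_eq_zero_left h))
  have hs0 : s ≠ 0 := by
    rintro rfl
    simp [ha, hcb, hbc] at hT
  have hbs : 2 * b * s ≠ 0 := mul_ne_zero (mul_ne_zero two_ne_zero (ofReal_ne_zero.2 hb)) hs0
  have hiff : ∀ w, w + c * conj w = s →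
      (4 * b / (a * (b + 1) ^ 2) * w.re ^ 2 + 4 * b / (a * (b - 1) ^ 2) * w.im ^ 2 = 1 ↔
        2 * b * s * w = a * ((b ^ 2 + 1) * c + 2 * b)) := fun w hw =>
    (ellipse_eq_one_iff_of_mem_line ha hb_add hb_sub hc0 hw).trans
      (line_ellipse_quadratic_iff hb hs0 hcb hbc hT)
  refine ⟨a * ((b ^ 2 + 1) * c + 2 * b) / (2 * b * s), ?_, ?_⟩
  · have h₀ := mul_div_cancel₀ (a * ((b ^ 2 + 1) * c + 2 * b)) hbs
    have hline := mem_line_of_mul_eq hc hs hb hs0 hT h₀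
    exact ⟨hline, (hiff _ hline).2 h₀⟩
  · rintro w ⟨hw, hE⟩
    rw [eq_div_iff hbs, mul_comm]
    exact (hiff w hw).1 hE

end Tangency

theorem interior_curve_two_ellipses_general (a b : ℝ)
    (ha : 0 < a) (ha' : a < 1) (hb : 0 < b) (hb' : b < 1)
    (hab : a ^ 3 * b ^ 3 - 2 * a ^ 2 * b ^ 2 - (a ^ 2 + b ^ 2) + 3 * a * b = 0)
    (B : ℂ → ℂ)
    (hB : ∀ z, B z = z * ((z ^ 2 - (a : ℂ)) / (1 - (a : ℂ) * z ^ 2)) *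
      ((z ^ 2 - (b : ℂ)) / (1 - (b : ℂ) * z ^ 2)))
    (lam : ℂ)
    (z₁ z₂ : ℂ) (hz₁ : ‖z₁‖ = 1) (hz₂ : ‖z₂‖ = 1)
    (hne : z₁ ≠ z₂) (h₁ : B z₁ = lam) (h₂ : B z₂ = lam)
    (L : Set ℂ) (hL : L = {z : ℂ | z + z₁ * z₂ * (starRingEnd ℂ) z = z₁ + z₂}) :
    (∃! w : ℂ, w ∈ L ∧
        (4 * b / (a * (b + 1) ^ 2)) * w.re ^ 2 +
          (4 * b / (a * (b - 1) ^ 2)) * w.im ^ 2 = 1) ∨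
    (∃! w : ℂ, w ∈ L ∧
        (4 * a / (b * (a + 1) ^ 2)) * w.re ^ 2 +
          (4 * a / (b * (a - 1) ^ 2)) * w.im ^ 2 = 1) := by
  subst hL
  have hab_ℂ := congrArg ((↑) : ℝ → ℂ) hab
  push_cast at hab_ℂ
  have ha₁ : |a| ≠ 1 := by rw [abs_of_pos ha]; exact ha'.ne
  have hb₁ : |b| ≠ 1 := by rw [abs_of_pos hb]; exact hb'.ne
  have hsym := mul_mul_conj_add_eq_add hz₁ hz₂
  rcases tangency_of_blaschke_eq hab_ℂ (by rwa [norm_real]) (by rwa [norm_real]) hz₁ hz₂ hne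
      (by rw [← hB, ← hB, h₁, h₂]) with hT | hT
  · exact .inl (existsUnique_mem_line_ellipse ha.ne' hb.ne' hb₁ (by simp [hz₁, hz₂]) hsym hT)
  · exact .inr (existsUnique_mem_line_ellipse hb.ne' ha.ne' ha₁ (by simp [hz₁, hz₂]) hsym hT)

theorem interior_curve_two_ellipses (a b : ℝ)
    (ha : 0 < a) (ha' : a < 1) (hb : 0 < b) (hb' : b < 1)
    (hab : a ^ 3 * b ^ 3 - 2 * a ^ 2 * b ^ 2 - (a ^ 2 + b ^ 2) + 3 * a * b = 0)
    (B : ℂ → ℂ)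
    (hB : ∀ z, B z = z * ((z ^ 2 - (a : ℂ)) / (1 - (a : ℂ) * z ^ 2)) *
      ((z ^ 2 - (b : ℂ)) / (1 - (b : ℂ) * z ^ 2)))
    (lam : ℂ) (hlam : ‖lam‖ = 1)
    (z₁ z₂ : ℂ) (hz₁ : ‖z₁‖ = 1) (hz₂ : ‖z₂‖ = 1)
    (hne : z₁ ≠ z₂) (h₁ : B z₁ = lam) (h₂ : B z₂ = lam)
    (L : Set ℂ) (hL : L = {z : ℂ | z + z₁ * z₂ * (starRingEnd ℂ) z = z₁ + z₂}) :
    (∃! w : ℂ, w ∈ L ∧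
        (4 * b / (a * (b + 1) ^ 2)) * w.re ^ 2 +
          (4 * b / (a * (b - 1) ^ 2)) * w.im ^ 2 = 1) ∨
    (∃! w : ℂ, w ∈ L ∧
        (4 * a / (b * (a + 1) ^ 2)) * w.re ^ 2 +
          (4 * a / (b * (a - 1) ^ 2)) * w.im ^ 2 = 1) :=
  interior_curve_two_ellipses_general a b ha ha' hb hb' hab B hB lam z₁ z₂ hz₁ hz₂ hne h₁ h₂ L hL
end
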